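/- Let β > 0, let g : Ω → ℂ^M be a random vector with independent components satisfying E[g_m] = 0, E[|g_m|²] = 1, E[|g_m|⁴] = 2, and let u : Ω → ℂ be independent of g with E[u] = 0, E[|u|²] = 1, E[|u|⁴] = 2 (as holds for standard complex Gaussians). Define the keyhole channel h = √β · u · g : Ω → ℂ^M. Then E[‖h‖²] = M β and Var(‖h‖²)/(E[‖h‖²])² = 1 + 2/M; in particular this ratio converges to 1 (not 0) as M → ∞, so the keyhole channel does not exhibit channel hardening. -/

import Mathlib

open MeasureTheory ProbabilityTheory Filter

/-!
The received power factors as `‖h‖² = β X Y` with `X = |u|²` and `Y = ∑ₘ |gₘ|²` independent.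
For independent `X, Y`, `Var(XY) = Var X Var Y + Var X (E Y)² + (E X)² Var Y`; here
`E X = Var X = 1` and `E Y = Var Y = M`, so `Var ‖h‖² = β² (M² + 2M)` against `E ‖h‖² = β M`.
The fluctuation of the single keyhole gain `|u|²` is shared by all antennas and does not
average out.
-/

section

variable {Ω : Type*} [MeasurableSpace Ω] {μ : Measure Ω}

theorem MeasureTheory.MemLp.norm_sq {E : Type*} [NormedAddCommGroup E] {f : Ω → E}
    (hf : MemLp f 4 μ) : MemLp (fun ω => ‖f ω‖ ^ 2) 2 μ := by
  have h := hf.norm_rpow_div 2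
  simp only [ENNReal.toReal_ofNat, Real.rpow_ofNat] at h
  convert h using 1
  norm_num [ENNReal.eq_div_iff]

theorem ProbabilityTheory.variance_norm_sq [IsProbabilityMeasure μ] {E : Type*}
    [NormedAddCommGroup E] {f : Ω → E} (hf : MemLp f 4 μ) :
    Var[fun ω => ‖f ω‖ ^ 2; μ] = ∫ ω, ‖f ω‖ ^ 4 ∂μ - (∫ ω, ‖f ω‖ ^ 2 ∂μ) ^ 2 := by
  simp only [variance_eq_sub hf.norm_sq, Pi.pow_apply, ← pow_mul]

theorem ProbabilityTheory.IndepFun.variance_mul [IsProbabilityMeasure μ] {X Y : Ω → ℝ}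
    (h : X ⟂ᵢ[μ] Y) (hX : MemLp X 2 μ) (hY : MemLp Y 2 μ) :
    Var[X * Y; μ] = Var[X; μ] * Var[Y; μ] + Var[X; μ] * μ[Y] ^ 2 + μ[X] ^ 2 * Var[Y; μ] := by
  have h_sq : (fun ω => X ω ^ 2) ⟂ᵢ[μ] (fun ω => Y ω ^ 2) :=
    h.comp (measurable_id.pow_const 2) (measurable_id.pow_const 2)
  have hXY : MemLp (X * Y) 2 μ := by
    refine (memLp_two_iff_integrable_sq (hX.1.mul hY.1)).2 ?_
    simp only [Pi.mul_apply, mul_pow]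
    exact h_sq.integrable_mul hX.integrable_sq hY.integrable_sq
  simp only [variance_eq_sub hXY, variance_eq_sub hX, variance_eq_sub hY, Pi.pow_apply,
    Pi.mul_apply, mul_pow]
  rw [h_sq.integral_fun_mul_eq_mul_integral (hX.1.pow 2) (hY.1.pow 2),
    h.integral_fun_mul_eq_mul_integral hX.1 hY.1]
  ring

theorem ProbabilityTheory.iIndepFun.indepFun_sum_sumElim {ι : Type*} [Fintype ι]
    {Y : ι → Ω → ℝ} {X : Ω → ℝ} (h : iIndepFun (Sum.elim Y fun _ : Unit => X) μ)
    (hY : ∀ i, AEMeasurable (Y i) μ) (hX : AEMeasurable X μ) :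
    (∑ i, Y i) ⟂ᵢ[μ] X := by
  have hmeas : ∀ j, AEMeasurable (Sum.elim Y (fun _ : Unit => X) j) μ := by
    rintro (i | -)
    exacts [hY i, hX]
  simpa [Finset.sum_map] using
    h.indepFun_finsetSum_of_notMem₀ hmeas (s := Finset.univ.map .inl) (i := .inr ()) (by simp)

theorem ProbabilityTheory.iIndepFun.integral_and_variance_mul_sum [IsProbabilityMeasure μ]
    {ι : Type*} [Fintype ι] {Y : ι → Ω → ℝ} {X : Ω → ℝ}
    (h : iIndepFun (Sum.elim Y fun _ : Unit => X) μ) (hY : ∀ i, MemLp (Y i) 2 μ)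
    (hX : MemLp X 2 μ) (hY_mean : ∀ i, μ[Y i] = 1) (hY_var : ∀ i, Var[Y i; μ] = 1)
    (hX_mean : μ[X] = 1) (hX_var : Var[X; μ] = 1) :
    μ[X * ∑ i, Y i] = (Fintype.card ι : ℝ) ∧
      Var[X * ∑ i, Y i; μ] = (Fintype.card ι : ℝ) ^ 2 + 2 * Fintype.card ι := by
  have hsum : MemLp (∑ i, Y i) 2 μ := memLp_finsetSum' _ fun i _ => hY i
  have hsum_mean : μ[∑ i, Y i] = (Fintype.card ι : ℝ) := by
    simp only [Finset.sum_apply]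
    rw [integral_finsetSum _ fun i _ => (hY i).integrable one_le_two]
    simp [hY_mean]
  have hsum_var : Var[∑ i, Y i; μ] = (Fintype.card ι : ℝ) := by
    rw [IndepFun.variance_sum (fun i _ => hY i)
      fun i _ j _ hij => h.indepFun (i := .inl i) (j := .inl j) (by simpa using hij)]
    simp [hY_var]
  have hX_sum : X ⟂ᵢ[μ] ∑ i, Y i :=
    (h.indepFun_sum_sumElim (fun i => (hY i).aemeasurable) hX.aemeasurable).symm
  rw [hX_sum.integral_mul_eq_mul_integral hX.1 hsum.1, hX_sum.variance_mul hX hsum, hX_mean,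
    hX_var, hsum_mean, hsum_var]
  constructor <;> ring

end

theorem keyhole_channel_no_hardening_general
    {Ω : Type*} [MeasurableSpace Ω] (μ : Measure Ω) [IsProbabilityMeasure μ]
    {M : ℕ} (hM : 0 < M) (β : ℝ) (hβ : 0 < β)
    (g : Ω → Fin M → ℂ) (u : Ω → ℂ)
    (hindep : iIndepFun
      (Sum.elim (fun m : Fin M => fun ω => g ω m)
        (fun _ : Unit => u)) μ)
    (hg4 : ∀ m, MemLp (fun ω => g ω m) 4 μ)
    (hg2 : ∀ m, ∫ ω, ‖g ω m‖ ^ 2 ∂μ = 1)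
    (hgf : ∀ m, ∫ ω, ‖g ω m‖ ^ 4 ∂μ = 2)
    (hu4 : MemLp u 4 μ)
    (hu2 : ∫ ω, ‖u ω‖ ^ 2 ∂μ = 1)
    (huf : ∫ ω, ‖u ω‖ ^ 4 ∂μ = 2)
    (h : Ω → Fin M → ℂ)
    (hdef : ∀ ω m, h ω m = (Real.sqrt β : ℂ) * u ω * g ω m) :
    (∫ ω, (∑ m, ‖h ω m‖ ^ 2) ∂μ = M * β) ∧
    (variance (fun ω => ∑ m, ‖h ω m‖ ^ 2) μ
        / (∫ ω, (∑ m, ‖h ω m‖ ^ 2) ∂μ) ^ 2 = 1 + 2 / M) ∧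
    Tendsto (fun M' : ℕ => 1 + 2 / (M' : ℝ)) atTop (nhds 1) := by
  set X : Ω → ℝ := fun ω => ‖u ω‖ ^ 2
  set Y : Fin M → Ω → ℝ := fun m ω => ‖g ω m‖ ^ 2
  have hXY : iIndepFun (Sum.elim Y fun _ : Unit => X) μ := by
    convert hindep.comp (fun _ z => ‖z‖ ^ 2) (fun _ => by fun_prop) with (m | _) <;> rfl
  have hnorm : (fun ω => ∑ m, ‖h ω m‖ ^ 2) = fun ω => β * (X * ∑ m, Y m) ω := by
    ext ω
    simp [hdef, mul_pow, Finset.mul_sum, Real.sq_sqrt hβ.le, mul_assoc, X, Y]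
  obtain ⟨hXY_mean, hXY_var⟩ := hXY.integral_and_variance_mul_sum (fun m => (hg4 m).norm_sq)
    hu4.norm_sq hg2 (fun m => by rw [variance_norm_sq (hg4 m), hg2, hgf]; norm_num) hu2
    (by rw [variance_norm_sq hu4, hu2, huf]; norm_num)
  rw [Fintype.card_fin] at hXY_mean hXY_var
  have hmean : ∫ ω, ∑ m, ‖h ω m‖ ^ 2 ∂μ = M * β := by
    rw [hnorm, integral_const_mul, hXY_mean, mul_comm]
  refine ⟨hmean, ?_, ?_⟩
  · rw [hmean, hnorm, variance_const_mul, hXY_var]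
    field_simp
  · simpa using (tendsto_const_nhds (x := (1 : ℝ))).add (tendsto_const_div_atTop_nhds_zero_nat 2)

/-- **The keyhole channel does not harden.**
For `h = √β u g` with `u` scalar fading and `g` the antenna fading vector,
all with zero mean, unit second moments and fourth moments `2`, one has
`E[‖h‖²] = Mβ` and `Var(‖h‖²)/(E[‖h‖²])² = 1 + 2/M → 1 ≠ 0` as `M → ∞`. -/
theorem keyhole_channel_no_hardening
    {Ω : Type*} [MeasurableSpace Ω] (μ : Measure Ω) [IsProbabilityMeasure μ]
    {M : ℕ} (hM : 0 < M) (β : ℝ) (hβ : 0 < β)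
    (g : Ω → Fin M → ℂ) (u : Ω → ℂ)
    (hindep : iIndepFun
      (Sum.elim (fun m : Fin M => fun ω => g ω m)
        (fun _ : Unit => u)) μ)
    (hg4 : ∀ m, MemLp (fun ω => g ω m) 4 μ)
    (hg0 : ∀ m, ∫ ω, g ω m ∂μ = 0)
    (hg2 : ∀ m, ∫ ω, ‖g ω m‖ ^ 2 ∂μ = 1)
    (hgf : ∀ m, ∫ ω, ‖g ω m‖ ^ 4 ∂μ = 2)
    (hu4 : MemLp u 4 μ)
    (hu0 : ∫ ω, u ω ∂μ = 0)
    (hu2 : ∫ ω, ‖u ω‖ ^ 2 ∂μ = 1)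
    (huf : ∫ ω, ‖u ω‖ ^ 4 ∂μ = 2)
    (h : Ω → Fin M → ℂ)
    (hdef : ∀ ω m, h ω m = (Real.sqrt β : ℂ) * u ω * g ω m) :
    (∫ ω, (∑ m, ‖h ω m‖ ^ 2) ∂μ = M * β) ∧
    (variance (fun ω => ∑ m, ‖h ω m‖ ^ 2) μ
        / (∫ ω, (∑ m, ‖h ω m‖ ^ 2) ∂μ) ^ 2 = 1 + 2 / M) ∧
    Tendsto (fun M' : ℕ => 1 + 2 / (M' : ℝ)) atTop (nhds 1) :=
  keyhole_channel_no_hardening_general μ hM β hβ g u hindep hg4 hg2 hgf hu4 hu2 huf h hdef
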